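/- arXiv:1601.02442 — 2 statements merged into one kernel-verified Lean document; each statement's English description precedes it below -/
import Mathlib

section
/- Let c > 1 and 0 ≤ λ ≤ 6, and let u(x) = -(1/c)·ln(sec(c·x)) + 3 + λ for 0 < x < π/(2c). Let x₁ = arccos(e^{(-2-λ)c})/c and x₂ = arccos(e^{(-4-λ)c})/c. Then for every x ∈ [x₁, x₂], |u'(x)| > (1/2)·e^{2c}. -/
open Real

/-!
The slope of `u` at `x` is `-tan (c x)`. On `[x₁, x₂]` the cosine `cos (c x)` lies between
`e^{(-4-λ)c} > 0` and `e^{(-2-λ)c} ≤ e^{-2c}`, so `tan² (c x) = cos⁻² (c x) - 1 ≥ e^{4c} - 1`,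
which exceeds `e^{4c} / 4` because `e^{4c} > 4 / 3`.
-/

theorem hasDerivAt_neg_log_sec {c x : ℝ} (hc : c ≠ 0) (hx : cos (c * x) ≠ 0) :
    HasDerivAt (fun y : ℝ => -(1 / c) * log (1 / cos (c * y))) (-tan (c * x)) x := by
  have hcos : HasDerivAt (fun y : ℝ => cos (c * y)) (-sin (c * x) * c) x :=
    (hasDerivAt_cos (c * x)).comp x ((hasDerivAt_id x).const_mul c |>.congr_deriv (mul_one c))
  have hfun : (fun y : ℝ => -(1 / c) * log (1 / cos (c * y))) =
      fun y => 1 / c * log (cos (c * y)) := by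
    funext y
    rw [one_div (cos _), log_inv]
    ring
  rw [hfun]
  refine (((hasDerivAt_log hx).comp x hcos).const_mul (1 / c)).congr_deriv ?_
  rw [tan_eq_sin_div_cos]
  field_simp

theorem cos_mem_Icc_of_mem_Icc_arccos {a b t : ℝ} (ha : a ∈ Set.Icc (-1) 1)
    (hb : b ∈ Set.Icc (-1) 1) (ht : t ∈ Set.Icc (arccos a) (arccos b)) :
    cos t ∈ Set.Icc b a := by
  have ht0 : 0 ≤ t := (arccos_nonneg a).trans ht.1
  have htπ : t ≤ π := ht.2.trans (arccos_le_pi b)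
  constructor
  · simpa only [cos_arccos hb.1 hb.2] using
      cos_le_cos_of_nonneg_of_le_pi ht0 (arccos_le_pi b) ht.2
  · simpa only [cos_arccos ha.1 ha.2] using
      cos_le_cos_of_nonneg_of_le_pi (arccos_nonneg a) htπ ht.1

theorem half_lt_abs_tan_of_abs_cos_le_inv {M t : ℝ} (hM : 0 < M) (hM2 : 4 / 3 < M ^ 2)
    (hcos : cos t ≠ 0) (h : |cos t| ≤ M⁻¹) : M / 2 < |tan t| := by
  have hsq : cos t ^ 2 ≤ (M ^ 2)⁻¹ := by
    rw [← sq_abs, ← inv_pow]; exact pow_le_pow_left₀ (abs_nonneg _) h 2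
  have hinv : M ^ 2 ≤ 1 + tan t ^ 2 := by
    rw [← inv_inv (1 + tan t ^ 2), inv_one_add_tan_sq hcos]
    exact (le_inv_comm₀ (by positivity) (by positivity)).1 hsq
  rw [← abs_of_pos (half_pos hM), ← sq_lt_sq]
  linarith

theorem grim_reaper_slope_bound_general (c lam : ℝ) (hc : 1 < c) (hlam0 : 0 ≤ lam) :
    ∀ x ∈ Set.Icc (Real.arccos (Real.exp ((-2 - lam) * c)) / c)
        (Real.arccos (Real.exp ((-4 - lam) * c)) / c),
      (1 / 2) * Real.exp (2 * c) <
        |deriv (fun y : ℝ => -(1 / c) * Real.log (1 / Real.cos (c * y)) + 3 + lam) x| := by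
  intro x hx
  have hc0 : 0 < c := by linarith
  have hexp_mem : ∀ s : ℝ, s ≤ 0 → exp s ∈ Set.Icc (-1) 1 := fun s hs =>
    ⟨by linarith [exp_pos s], exp_le_one_iff.2 hs⟩
  have hcx : c * x ∈ Set.Icc (arccos (exp ((-2 - lam) * c))) (arccos (exp ((-4 - lam) * c))) :=
    ⟨(div_le_iff₀' hc0).1 hx.1, (le_div_iff₀' hc0).1 hx.2⟩
  obtain ⟨hcos_ge, hcos_le⟩ :=
    cos_mem_Icc_of_mem_Icc_arccos (hexp_mem _ (by nlinarith)) (hexp_mem _ (by nlinarith)) hcx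
  have hcos_pos : 0 < cos (c * x) := (exp_pos _).trans_le hcos_ge
  rw [((hasDerivAt_neg_log_sec hc0.ne' hcos_pos.ne').add_const 3 |>.add_const lam).deriv, abs_neg,
    one_div_mul_eq_div]
  refine half_lt_abs_tan_of_abs_cos_le_inv (exp_pos _) ?_ hcos_pos.ne' ?_
  · nlinarith [add_one_le_exp (2 * c)]
  · calc |cos (c * x)| = cos (c * x) := abs_of_pos hcos_pos
      _ ≤ exp ((-2 - lam) * c) := hcos_le
      _ ≤ (exp (2 * c))⁻¹ := by rw [← exp_neg]; exact exp_le_exp.2 (by nlinarith)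

theorem grim_reaper_slope_bound (c lam : ℝ) (hc : 1 < c) (hlam0 : 0 ≤ lam) (hlam6 : lam ≤ 6) :
    ∀ x ∈ Set.Icc (Real.arccos (Real.exp ((-2 - lam) * c)) / c)
        (Real.arccos (Real.exp ((-4 - lam) * c)) / c),
      (1 / 2) * Real.exp (2 * c) <
        |deriv (fun y : ℝ => -(1 / c) * Real.log (1 / Real.cos (c * y)) + 3 + lam) x| :=
  grim_reaper_slope_bound_general c lam hc hlam0
end

section
/- Let c > 1 and 0 ≤ λ ≤ 6. Let u(x) = -(1/c)·ln(sec(c·x)) + 3 + λ and g(x) = sin(1/x), both on the interval (0, π/(2c)). Then the graphs of u and g intersect in exactly one point; i.e., there is a unique x ∈ (0, π/(2c)) with u(x) = g(x). -/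
/-!
Write `u` for the shifted grim reaper and `g x = sin (1 / x)`. Since `u` is strictly decreasing
and `g` takes values in `[-1, 1]`, every intersection lies in the sublevel set `{u ≤ 1}`, an
interval on which `cos (c x) ≤ exp (-2c)`. There `c x` is close to `π / 2`, so
`|u'| = tan (c x) ≥ exp (2c) / 2` beats `|g'| ≤ 1 / x² ≤ 2c² / 3`, and `u - g` is strictly
decreasing; this gives uniqueness. Existence is the intermediate value theorem between the points
where `u = 1` and `u = -1`.
-/

open Real Set

noncomputable def grimReaper (c μ x : ℝ) : ℝ := -(1 / c) * log (1 / cos (c * x)) + μ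

section GrimReaper

variable {c μ x : ℝ}

lemma mul_mem_Ioo_zero_pi_div_two (hc : 0 < c) (hx : x ∈ Ioo 0 (π / (2 * c))) :
    c * x ∈ Ioo 0 (π / 2) := by
  refine ⟨mul_pos hc hx.1, ?_⟩
  calc c * x < c * (π / (2 * c)) := mul_lt_mul_of_pos_left hx.2 hc
    _ = π / 2 := by field_simp

lemma cos_mul_pos (hc : 0 < c) (hx : x ∈ Ioo 0 (π / (2 * c))) : 0 < cos (c * x) :=
  have h := mul_mem_Ioo_zero_pi_div_two hc hx
  cos_pos_of_mem_Ioo ⟨by linarith [h.1, pi_pos], h.2⟩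

lemma grimReaper_eq_log_cos_div (c μ x : ℝ) :
    grimReaper c μ x = log (cos (c * x)) / c + μ := by
  rw [grimReaper, one_div (cos _), log_inv]
  ring

lemma hasDerivAt_grimReaper (hc : c ≠ 0) (hx : cos (c * x) ≠ 0) :
    HasDerivAt (grimReaper c μ) (-tan (c * x)) x := by
  have hcos : HasDerivAt (fun y => cos (c * y)) (-sin (c * x) * c) x := by
    simpa using ((hasDerivAt_id x).const_mul c).cos
  have h := ((hcos.log hx).div_const c).add_const μ
  rw [funext (grimReaper_eq_log_cos_div c μ)]
  refine h.congr_deriv ?_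
  rw [tan_eq_sin_div_cos]
  field_simp

lemma strictAntiOn_grimReaper (hc : 0 < c) :
    StrictAntiOn (grimReaper c μ) (Ioo 0 (π / (2 * c))) := by
  have hu : ∀ x ∈ Ioo 0 (π / (2 * c)), HasDerivAt (grimReaper c μ) (-tan (c * x)) x :=
    fun x hx => hasDerivAt_grimReaper hc.ne' (cos_mul_pos hc hx).ne'
  refine strictAntiOn_of_deriv_neg (convex_Ioo _ _)
    (fun x hx => (hu x hx).continuousAt.continuousWithinAt) fun x hx => ?_
  rw [interior_Ioo] at hx
  have h := mul_mem_Ioo_zero_pi_div_two hc hx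
  rw [(hu x hx).deriv]
  exact neg_neg_of_pos (tan_pos_of_pos_of_lt_pi_div_two h.1 h.2)

/-- The level `y` is attained where `cos (c x) = exp (-c (μ - y))`. -/
lemma exists_grimReaper_eq {y : ℝ} (hc : 0 < c) (hy : y < μ) :
    ∃ x ∈ Ioo 0 (π / (2 * c)), grimReaper c μ x = y := by
  set t := exp (-(c * (μ - y)))
  have ht0 : 0 < t := exp_pos _
  have ht1 : t < 1 := exp_lt_one_iff.2 (by nlinarith)
  refine ⟨arccos t / c, ⟨div_pos (arccos_pos.2 ht1) hc, ?_⟩, ?_⟩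
  · rw [show π / (2 * c) = π / 2 / c by ring]
    exact div_lt_div_of_pos_right (arccos_lt_pi_div_two.2 ht0) hc
  · rw [grimReaper_eq_log_cos_div, mul_div_cancel₀ _ hc.ne', cos_arccos (by linarith) ht1.le,
      log_exp]
    field_simp
    ring

lemma cos_mul_le_of_grimReaper_le {y : ℝ} (hc : 0 < c) (hx : x ∈ Ioo 0 (π / (2 * c)))
    (hxy : grimReaper c μ x ≤ y) : cos (c * x) ≤ exp (-(c * (μ - y))) := by
  rw [← log_le_iff_le_exp (cos_mul_pos hc hx)]
  rw [grimReaper_eq_log_cos_div, ← le_sub_iff_add_le, div_le_iff₀ hc] at hxy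
  linarith

/-- Near `π / 2` the tangent dominates `1 / x²`: the quadratic lower bound for `exp (2 c)` gives
`tan (c x) ≥ exp (2 c) / 2`, while `cos (c x) ≤ 1 / 5` forces `(c x)² ≥ 3 / 2`. -/
lemma one_div_sq_lt_tan_mul (hc : 1 ≤ c) (hx : x ∈ Ioo 0 (π / (2 * c)))
    (hcos : cos (c * x) ≤ exp (-(2 * c))) : 1 / x ^ 2 < tan (c * x) := by
  have hc0 : 0 < c := by linarith
  obtain ⟨hθ0, hθ⟩ := mul_mem_Ioo_zero_pi_div_two hc0 hx
  set θ := c * x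
  set E := exp (2 * c)
  have hE : 1 + 2 * c + 2 * c ^ 2 ≤ E := by
    have := quadratic_le_exp_of_nonneg (by linarith : 0 ≤ 2 * c)
    nlinarith
  have hcosθ : 0 < cos θ := cos_pos_of_mem_Ioo ⟨by linarith [pi_pos], hθ⟩
  have hcosE : cos θ * E ≤ 1 := by
    rw [exp_neg] at hcos
    calc cos θ * E ≤ E⁻¹ * E := by gcongr
      _ = 1 := inv_mul_cancel₀ (exp_pos _).ne'
  have hcos5 : cos θ ≤ 1 / 5 := by nlinarith
  have hθsq : 3 / 2 ≤ θ ^ 2 := by nlinarith [one_sub_sq_div_two_le_cos (x := θ)]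
  have hsin : 1 / 2 ≤ sin θ := by
    nlinarith [sin_sq_add_cos_sq θ, sin_pos_of_pos_of_lt_pi hθ0 (by linarith [pi_pos])]
  have htan : E / 2 ≤ tan θ := by
    rw [tan_eq_sin_div_cos, le_div_iff₀ hcosθ]
    nlinarith
  have hinv : 1 / x ^ 2 = c ^ 2 / θ ^ 2 := by
    rw [mul_pow]
    field_simp
  have hinv_le : 1 / x ^ 2 ≤ 2 * c ^ 2 / 3 := by
    rw [hinv, div_le_iff₀ (by positivity)]
    nlinarith
  nlinarith

variable (c μ) in
def grimReaperSublevel : Set ℝ := {x ∈ Ioo 0 (π / (2 * c)) | grimReaper c μ x ≤ 1}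

lemma hasDerivAt_grimReaper_sub_sin_inv (hc : 0 < c) (hx : x ∈ Ioo 0 (π / (2 * c))) :
    HasDerivAt (fun y => grimReaper c μ y - sin (1 / y))
      (-tan (c * x) + cos (1 / x) / x ^ 2) x := by
  have hsin : HasDerivAt (fun y => sin (1 / y)) (cos (1 / x) * -(x ^ 2)⁻¹) x := by
    simpa only [one_div] using (hasDerivAt_inv hx.1.ne').sin
  have hu := hasDerivAt_grimReaper (μ := μ) hc.ne' (cos_mul_pos hc hx).ne'
  refine (hu.sub hsin).congr_deriv ?_
  ring

lemma continuousOn_grimReaper_sub_sin_inv (hc : 0 < c) :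
    ContinuousOn (fun x => grimReaper c μ x - sin (1 / x)) (Ioo 0 (π / (2 * c))) :=
  fun _ hx => (hasDerivAt_grimReaper_sub_sin_inv hc hx).continuousAt.continuousWithinAt

lemma strictAntiOn_grimReaper_sub_sin_inv (hc : 1 ≤ c) (hμ : 3 ≤ μ) :
    StrictAntiOn (fun x => grimReaper c μ x - sin (1 / x)) (grimReaperSublevel c μ) := by
  have hc0 : 0 < c := by linarith
  have hconvex : Convex ℝ (grimReaperSublevel c μ) := by
    refine OrdConnected.convex ⟨fun a ha b hb x hx => ?_⟩
    have hxD : x ∈ Ioo 0 (π / (2 * c)) := ⟨ha.1.1.trans_le hx.1, hx.2.trans_lt hb.1.2⟩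
    exact ⟨hxD, ((strictAntiOn_grimReaper hc0).antitoneOn ha.1 hxD hx.1).trans ha.2⟩
  refine strictAntiOn_of_deriv_neg hconvex
    ((continuousOn_grimReaper_sub_sin_inv hc0).mono fun _ hx => hx.1) fun x hx => ?_
  obtain ⟨hxD, hxu⟩ := interior_subset hx
  rw [(hasDerivAt_grimReaper_sub_sin_inv hc0 hxD).deriv]
  have hcos : cos (c * x) ≤ exp (-(2 * c)) :=
    (cos_mul_le_of_grimReaper_le hc0 hxD hxu).trans (exp_le_exp.2 (by nlinarith))
  have hlt := one_div_sq_lt_tan_mul hc hxD hcos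
  have hle : cos (1 / x) / x ^ 2 ≤ 1 / x ^ 2 :=
    div_le_div_of_nonneg_right (cos_le_one _) (by positivity)
  linarith

lemma exists_grimReaper_eq_sin_inv (hc : 0 < c) (hμ : 1 < μ) :
    ∃ x ∈ Ioo 0 (π / (2 * c)), grimReaper c μ x = sin (1 / x) := by
  obtain ⟨a, ha, hua⟩ := exists_grimReaper_eq hc hμ
  obtain ⟨b, hb, hub⟩ := exists_grimReaper_eq hc (by linarith : -1 < μ)
  have hab : a < b := (strictAntiOn_grimReaper hc).lt_iff_gt hb ha |>.1 (by linarith)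
  have hsub : Icc a b ⊆ Ioo 0 (π / (2 * c)) := Icc_subset_Ioo ha.1 hb.2
  obtain ⟨x, hx, hx0⟩ := intermediate_value_Icc' (f := fun x => grimReaper c μ x - sin (1 / x))
    hab.le ((continuousOn_grimReaper_sub_sin_inv hc).mono hsub)
    (mem_Icc.2 ⟨by linarith [neg_one_le_sin (1 / b)], by linarith [sin_le_one (1 / a)]⟩ :
      (0 : ℝ) ∈ Icc _ _)
  exact ⟨x, hsub hx, sub_eq_zero.1 hx0⟩

end GrimReaper

theorem grim_reaper_meets_sine_curve_once_general (c lam : ℝ) (hc : 1 < c)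
    (hlam0 : 0 ≤ lam) :
    ∃! x : ℝ, x ∈ Set.Ioo 0 (π / (2 * c)) ∧
      -(1 / c) * Real.log (1 / Real.cos (c * x)) + 3 + lam = Real.sin (1 / x) := by
  simp only [add_assoc]
  change ∃! x, x ∈ Ioo 0 (π / (2 * c)) ∧ grimReaper c (3 + lam) x = sin (1 / x)
  obtain ⟨x₀, hx₀, hx₀eq⟩ :=
    exists_grimReaper_eq_sin_inv (by linarith : 0 < c) (by linarith : 1 < 3 + lam)
  refine ⟨x₀, ⟨hx₀, hx₀eq⟩, fun y ⟨hy, hyeq⟩ => ?_⟩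
  refine (strictAntiOn_grimReaper_sub_sin_inv hc.le (by linarith)).injOn
    ⟨hy, hyeq ▸ sin_le_one _⟩ ⟨hx₀, hx₀eq ▸ sin_le_one _⟩ ?_
  rw [hyeq, hx₀eq, sub_self, sub_self]

theorem grim_reaper_meets_sine_curve_once (c lam : ℝ) (hc : 1 < c)
    (hlam0 : 0 ≤ lam) (hlam6 : lam ≤ 6) :
    ∃! x : ℝ, x ∈ Set.Ioo 0 (π / (2 * c)) ∧
      -(1 / c) * Real.log (1 / Real.cos (c * x)) + 3 + lam = Real.sin (1 / x) :=
  grim_reaper_meets_sine_curve_once_general c lam hc hlam0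
end
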